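/- arXiv:1911.11636 — 2 statements merged into one kernel-verified Lean document; each statement's English description precedes it below -/
import Mathlib

section
/- Conversely, let T be a linear map from functions m̃ : ZMod N_θ × Fin N_ρ → ℝ to functions d : ZMod N_θ × Fin N_h → ℝ that commutes with angular rotations (i.e., T(m̃(· - φ, ·))(s, h) = (T m̃)(s - φ, h) for all φ ∈ ZMod N_θ). Then there exists κ : Fin N_h × Fin N_ρ × ZMod N_θ → ℝ such that (T m̃)(s, h) = Σ_ρ Σ_θ κ(h, ρ, s - θ) · m̃(θ, ρ). -/
/-!
Write `m` as a combination of point masses `δ_(θ,ρ)`. Each `δ_(θ,ρ)` is the translate by `θ` of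
`δ_(0,ρ)`, so by equivariance `T δ_(θ,ρ) (s, h) = T δ_(0,ρ) (s - θ, h)`; the kernel is
`κ (h, ρ, t) = T δ_(0,ρ) (t, h)`.
-/

open Finset

theorem LinearMap.apply_eq_sum_mul_apply_single {α β R : Type*} [Fintype α] [DecidableEq α]
    [CommSemiring R] (T : (α → R) →ₗ[R] (β → R)) (m : α → R) (x : β) :
    T m x = ∑ a, m a * T (Pi.single a 1) x := by
  conv_lhs => rw [← Finset.univ_sum_single m]
  rw [map_sum, Finset.sum_apply]
  refine sum_congr rfl fun a _ => ?_
  rw [← smul_eq_mul, ← Pi.smul_apply, ← map_smul, ← Pi.single_smul', smul_eq_mul, mul_one]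

section

variable {G ι : Type*} [AddCommGroup G] [DecidableEq G] [DecidableEq ι]

theorem Pi.single_prod_eq_single_zero_comp_sub {R : Type*} [Zero R] (θ : G) (ρ : ι) (r : R) :
    (Pi.single (θ, ρ) r : G × ι → R) =
      fun p => (Pi.single (0, ρ) r : G × ι → R) (p.1 - θ, p.2) := by
  funext p
  simp only [Pi.single_apply, Prod.ext_iff, sub_eq_zero]

variable [Fintype G] [Fintype ι] {κ R : Type*} [CommSemiring R]

theorem LinearMap.apply_eq_sum_conv_of_map_translate
    (T : (G × ι → R) →ₗ[R] (G × κ → R))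
    (hT : ∀ (φ : G) (m : G × ι → R) (s : G) (h : κ),
      T (fun p => m (p.1 - φ, p.2)) (s, h) = T m (s - φ, h))
    (m : G × ι → R) (s : G) (h : κ) :
    T m (s, h) = ∑ ρ : ι, ∑ θ : G, T (Pi.single (0, ρ) 1) (s - θ, h) * m (θ, ρ) := by
  calc T m (s, h) = ∑ p : G × ι, m p * T (Pi.single p 1) (s, h) :=
        T.apply_eq_sum_mul_apply_single m (s, h)
    _ = ∑ ρ : ι, ∑ θ : G, T (Pi.single (0, ρ) 1) (s - θ, h) * m (θ, ρ) := by
        rw [Fintype.sum_prod_type, Finset.sum_comm]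
        refine sum_congr rfl fun ρ _ => sum_congr rfl fun θ _ => ?_
        rw [Pi.single_prod_eq_single_zero_comp_sub θ ρ, hT, mul_comm]

end

theorem rotation_equivariant_is_convolution
    (Nθ Nρ Nh : ℕ) [NeZero Nθ]
    (T : (ZMod Nθ × Fin Nρ → ℝ) →ₗ[ℝ] (ZMod Nθ × Fin Nh → ℝ))
    (hT : ∀ (φ : ZMod Nθ) (mtil : ZMod Nθ × Fin Nρ → ℝ) (s : ZMod Nθ) (h : Fin Nh),
      T (fun p => mtil (p.1 - φ, p.2)) (s, h) = T mtil (s - φ, h)) :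
    ∃ κ : Fin Nh × Fin Nρ × ZMod Nθ → ℝ,
      ∀ (mtil : ZMod Nθ × Fin Nρ → ℝ) (s : ZMod Nθ) (h : Fin Nh),
        T mtil (s, h) = ∑ ρ : Fin Nρ, ∑ θ : ZMod Nθ, κ (h, ρ, s - θ) * mtil (θ, ρ) :=
  ⟨fun x => T (Pi.single (0, x.2.1) 1) (x.2.2, x.1), T.apply_eq_sum_conv_of_map_translate hT⟩
end

section
/- Let w, N_cnn, N_θ be positive integers and consider a composition of N_cnn cyclic convolution layers on ZMod N_θ, each with kernel support contained in {0, 1, ..., w-1} (as a subset of ZMod N_θ, with w < N_θ). Then the output at index s of the composed map depends only on input values at indices s - j for 0 ≤ j ≤ N_cnn·(w-1). In particular, if N_cnn·(w-1) < N_θ - 1, there exist indices s, θ such that the output at s is independent of the input at θ. -/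
/-!
Each layer reads its input at `s - j` with `0 ≤ j < w` only, so by induction `n` layers read it
at `s - (j₁ + ⋯ + jₙ)`, an offset of at most `n (w - 1)`. If that bound is below `Nθ - 1`, the
offset `n (w - 1) + 1` is still a residue distinct from all of these, and the input there is
never read.
-/

/-- Composition of `n` cyclic convolution layers with kernels `k 0, …, k (n-1)`. -/
def convLayers (Nθ : ℕ) [NeZero Nθ] (k : ℕ → ZMod Nθ → ℝ) :
    ℕ → (ZMod Nθ → ℝ) → ZMod Nθ → ℝ
  | 0, f => f
  | n + 1, f => fun s => ∑ θ : ZMod Nθ, k n (s - θ) * convLayers Nθ k n f θ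

theorem sum_kernel_mul_eq_of_eq_on_window {G : Type*} [AddCommGroupWithOne G] [Fintype G]
    {κ : G → ℝ} {w : ℕ} (hκ : ∀ t : G, (∀ j : ℕ, j < w → t ≠ (j : G)) → κ t = 0)
    {F H : G → ℝ} {s : G} (hFH : ∀ j : ℕ, j < w → F (s - j) = H (s - j)) :
    ∑ θ, κ (s - θ) * F θ = ∑ θ, κ (s - θ) * H θ := by
  refine Finset.sum_congr rfl fun θ _ => ?_
  by_cases hθ : ∃ j : ℕ, j < w ∧ s - θ = (j : G)
  · obtain ⟨j, hjw, hj⟩ := hθ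
    obtain rfl : θ = s - j := by rw [← hj, sub_sub_cancel]
    rw [hFH j hjw]
  · push Not at hθ
    rw [hκ (s - θ) hθ, zero_mul, zero_mul]

theorem convLayers_eq_of_eq_on_window {Nθ : ℕ} [NeZero Nθ] {k : ℕ → ZMod Nθ → ℝ} {w : ℕ}
    (hsupp : ∀ (i : ℕ) (t : ZMod Nθ), (∀ j : ℕ, j < w → t ≠ (j : ZMod Nθ)) → k i t = 0)
    (n : ℕ) {f g : ZMod Nθ → ℝ} {s : ZMod Nθ}
    (hfg : ∀ j : ℕ, j ≤ n * (w - 1) → f (s - j) = g (s - j)) :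
    convLayers Nθ k n f s = convLayers Nθ k n g s := by
  induction n generalizing s with
  | zero => simpa [convLayers] using hfg 0 (Nat.zero_le _)
  | succ n ih =>
    refine sum_kernel_mul_eq_of_eq_on_window (hsupp n) fun j hjw => ih fun j' hj' => ?_
    have hoffset : s - j - j' = s - ((j + j' : ℕ) : ZMod Nθ) := by push_cast; ring
    rw [hoffset]
    exact hfg _ (by rw [Nat.succ_mul]; omega)

theorem ZMod.natCast_ne_natCast_of_lt {N a b : ℕ} (ha : a < N) (hb : b < N) (hab : a ≠ b) :
    (a : ZMod N) ≠ b := by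
  rwa [Ne, ZMod.natCast_eq_natCast_iff', Nat.mod_eq_of_lt ha, Nat.mod_eq_of_lt hb]

theorem receptive_field_of_composed_convolutions_general
    (w Ncnn Nθ : ℕ) [NeZero Nθ]
    (k : ℕ → ZMod Nθ → ℝ)
    (hsupp : ∀ (i : ℕ) (t : ZMod Nθ),
      (∀ j : ℕ, j < w → t ≠ (j : ZMod Nθ)) → k i t = 0) :
    (∀ (f g : ZMod Nθ → ℝ) (s : ZMod Nθ),
        (∀ j : ℕ, j ≤ Ncnn * (w - 1) → f (s - (j : ZMod Nθ)) = g (s - (j : ZMod Nθ))) →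
        convLayers Nθ k Ncnn f s = convLayers Nθ k Ncnn g s) ∧
    (Ncnn * (w - 1) < Nθ - 1 →
      ∃ (s θ : ZMod Nθ), ∀ (f : ZMod Nθ → ℝ) (c : ℝ),
        convLayers Nθ k Ncnn (Function.update f θ c) s = convLayers Nθ k Ncnn f s) := by
  refine ⟨fun f g s => convLayers_eq_of_eq_on_window hsupp Ncnn, fun hlt => ?_⟩
  set M := Ncnn * (w - 1)
  refine ⟨0, -((M + 1 : ℕ) : ZMod Nθ), fun f c => convLayers_eq_of_eq_on_window hsupp Ncnn ?_⟩
  intro j hj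
  refine Function.update_of_ne ?_ _ _
  rw [zero_sub, Ne, neg_inj]
  exact ZMod.natCast_ne_natCast_of_lt (by omega) (by omega) (by omega)

theorem receptive_field_of_composed_convolutions
    (w Ncnn Nθ : ℕ) [NeZero Nθ] (hw : 0 < w) (hcnn : 0 < Ncnn) (hwN : w < Nθ)
    (k : ℕ → ZMod Nθ → ℝ)
    (hsupp : ∀ (i : ℕ) (t : ZMod Nθ),
      (∀ j : ℕ, j < w → t ≠ (j : ZMod Nθ)) → k i t = 0) :
    (∀ (f g : ZMod Nθ → ℝ) (s : ZMod Nθ),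
        (∀ j : ℕ, j ≤ Ncnn * (w - 1) → f (s - (j : ZMod Nθ)) = g (s - (j : ZMod Nθ))) →
        convLayers Nθ k Ncnn f s = convLayers Nθ k Ncnn g s) ∧
    (Ncnn * (w - 1) < Nθ - 1 →
      ∃ (s θ : ZMod Nθ), ∀ (f : ZMod Nθ → ℝ) (c : ℝ),
        convLayers Nθ k Ncnn (Function.update f θ c) s = convLayers Nθ k Ncnn f s) :=
  receptive_field_of_composed_convolutions_general w Ncnn Nθ k hsupp
end
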